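/- Let n <= q-1, r a positive integer with n = mr + s, 1 <= s <= r, and d >= 2. The code C with parity-check matrix H built from Vandermonde columns (alpha_{ij}, ..., alpha_{ij}^{d-1})^T with pairwise distinct nonzero alpha_{ij}, block-indicator rows, and one appended extra column per block, is a q-ary linear code of length n + ceil(n/r), dimension n - d + 1, minimum distance at least d+1, and locality r. -/

import Mathlib

open Finset

/-- `R` (containing `i`) is a recovery set at coordinate `i` for the code `C`. -/
def IsRecoverySet {F : Type*} [Field F] {ι : Type*} [Fintype ι]
    (C : Submodule F (ι → F)) (i : ι) (R : Finset ι) : Prop :=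
  i ∈ R ∧ ∀ u ∈ C, ∀ v ∈ C, (∀ j ∈ R, j ≠ i → u j = v j) → u i = v i

/-- `C` has locality `r`: every coordinate has a recovery set of size at most `r+1`. -/
def HasLocality {F : Type*} [Field F] {ι : Type*} [Fintype ι]
    (C : Submodule F (ι → F)) (r : ℕ) : Prop :=
  ∀ i : ι, ∃ R : Finset ι, R.card ≤ r + 1 ∧ IsRecoverySet C i R

/-- Every nonzero codeword of `C` has Hamming weight at least `d`. -/
def DistAtLeast {F : Type*} [Field F] [DecidableEq F] {ι : Type*} [Fintype ι]
    (C : Submodule F (ι → F)) (d : ℕ) : Prop :=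
  ∀ c ∈ C, c ≠ 0 → d ≤ hammingNorm c

/-- `C` has minimum distance exactly `d`. -/
def IsMinDist {F : Type*} [Field F] [DecidableEq F] {ι : Type*} [Fintype ι]
    (C : Submodule F (ι → F)) (d : ℕ) : Prop :=
  (∃ c ∈ C, c ≠ 0 ∧ hammingNorm c = d) ∧ DistAtLeast C d

/-- The lengthened matrix `H` of Equation (5): columns of `H0` are grouped into `b` consecutive
blocks of size at most `r` (column `j` lies in block `j / r`); on top we add one indicator row
per block (equal to `1` on the columns of that block and on the appended extra column of that
block, `0` elsewhere), and for each block we append one extra column whose `H0`-part is zero. -/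
def lengthenMatrix {F : Type*} [Field F] {m n : ℕ} (H0 : Matrix (Fin m) (Fin n) F)
    (r b : ℕ) : Matrix (Fin b ⊕ Fin m) (Fin n ⊕ Fin b) F :=
  fun x y =>
    match x, y with
    | Sum.inl i, Sum.inl j => if (j : ℕ) / r = (i : ℕ) then 1 else 0
    | Sum.inl i, Sum.inr i' => if i = i' then 1 else 0
    | Sum.inr i, Sum.inl j => H0 i j
    | Sum.inr _, Sum.inr _ => 0


/-!
A vector of Hamming weight at most `k` that is orthogonal to `(α_j ^ t)_j` for all `t < k`
vanishes: on its support this is a nonsingular square Vandermonde system. Hence nonzero vectors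
in the kernel of the Vandermonde part `V` have weight at least `d`, and at least `d + 1` if their
coordinates also sum to zero; in particular `V` has rank `min (d - 1) n`. Dropping the extra
columns identifies the code with `ker V`, since each extra coordinate is minus a block sum. A
nonzero codeword either is nonzero on an extra column, adding one to the weight `≥ d` of its
original part, or has all block sums, hence its total sum, equal to zero. Finally, every
block-indicator row is a dual codeword of weight at most `r + 1`, which gives locality `r`.
-/

open Module LinearMap

theorem hammingNorm_sum_elim {F A B : Type*} [Zero F] [DecidableEq F] [Fintype A] [Fintype B]
    (x : A → F) (y : B → F) :
    hammingNorm (Sum.elim x y) = hammingNorm x + hammingNorm y := by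
  have h : ({i | Sum.elim x y i ≠ 0} : Finset (A ⊕ B))
      = ({a | x a ≠ 0} : Finset A).disjSum ({b | y b ≠ 0} : Finset B) := by
    ext (a | b) <;> simp
  simp only [hammingNorm, h, card_disjSum]

section PowerSums

variable {F ι : Type*} [Field F] [Fintype ι]

theorem eq_zero_of_sum_mul_pow_eq_zero [DecidableEq F] {α c : ι → F} (hα : Function.Injective α)
    (h : ∀ t < hammingNorm c, ∑ j, c j * α j ^ t = 0) : c = 0 := by
  set S : Finset ι := {j | c j ≠ 0}
  let e : Fin #S ≃ S := S.equivFin.symm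
  have hce : (fun i => c (e i)) = 0 := by
    refine Matrix.eq_zero_of_forall_pow_sum_mul_pow_eq_zero (f := fun i => α (e i))
      (fun i i' hii' => e.injective (Subtype.ext (hα hii'))) fun t => ?_
    rw [e.sum_comp (fun j : S => c j * α j ^ (t : ℕ)),
      sum_coe_sort S (fun j => c j * α j ^ (t : ℕ)),
      sum_filter_of_ne fun j _ hj => left_ne_zero_of_mul hj]
    exact h t t.isLt
  ext j
  by_contra hj
  exact hj (by simpa using congrFun hce (e.symm ⟨j, by simpa [S] using hj⟩))

/-- The parity-check matrix of a generalized Reed–Solomon code with evaluation points `α`. -/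
def vandermondeCheck (k : ℕ) (α : ι → F) : Matrix (Fin k) ι F :=
  fun t j => α j ^ ((t : ℕ) + 1)

variable {k : ℕ} {α : ι → F}

theorem mem_ker_vandermondeCheck {x : ι → F} :
    x ∈ ker (vandermondeCheck k α).mulVecLin ↔ ∀ t < k, ∑ j, x j * α j ^ (t + 1) = 0 := by
  simp [funext_iff, Matrix.mulVec, dotProduct, vandermondeCheck, Fin.forall_iff, mul_comm]

theorem distAtLeast_ker_vandermondeCheck [DecidableEq F] (hα : Function.Injective α)
    (hα0 : ∀ j, α j ≠ 0) :
    DistAtLeast (ker (vandermondeCheck k α).mulVecLin) (k + 1) := by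
  intro x hx hx0
  by_contra! hwt
  have hαx : (fun j => α j * x j) = 0 := by
    refine eq_zero_of_sum_mul_pow_eq_zero hα fun t ht => ?_
    have hnorm : hammingNorm (fun j => α j * x j) = hammingNorm x := by
      simp [hammingNorm, hα0]
    rw [← mem_ker_vandermondeCheck.mp hx t (by omega)]
    exact sum_congr rfl fun j _ => by ring
  exact hx0 (funext fun j => by simpa [hα0 j] using congrFun hαx j)

theorem add_two_le_hammingNorm_of_mem_ker_vandermondeCheck [DecidableEq F]
    (hα : Function.Injective α) {x : ι → F} (hx : x ∈ ker (vandermondeCheck k α).mulVecLin)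
    (hsum : ∑ j, x j = 0) (hx0 : x ≠ 0) : k + 2 ≤ hammingNorm x := by
  by_contra! hwt
  refine hx0 (eq_zero_of_sum_mul_pow_eq_zero hα fun t ht => ?_)
  rcases t with _ | t
  · simpa using hsum
  · exact mem_ker_vandermondeCheck.mp hx t (by omega)

theorem rank_vandermondeCheck (hα : Function.Injective α) (hα0 : ∀ j, α j ≠ 0) :
    (vandermondeCheck k α).rank = min k (Fintype.card ι) := by
  classical
  refine le_antisymm (le_min ?_ (Matrix.rank_le_card_width _)) ?_
  · simpa using Matrix.rank_le_card_height (vandermondeCheck k α)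
  set m := min k (Fintype.card ι)
  let e : Fin m ↪ ι :=
    (Fin.castLEEmb (min_le_right _ _)).trans (Fintype.equivFin ι).symm.toEmbedding
  have hinj : Function.Injective (vandermondeCheck m (α ∘ e)).mulVecLin := by
    rw [← LinearMap.ker_eq_bot, eq_bot_iff]
    intro x hx
    by_contra hx0
    have := distAtLeast_ker_vandermondeCheck (hα.comp e.injective) (fun j => hα0 (e j)) x hx hx0
    have : hammingNorm x ≤ m := hammingNorm_le_card_fintype.trans_eq (Fintype.card_fin m)
    omega
  calc m = (vandermondeCheck m (α ∘ e)).rank := by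
        rw [Matrix.rank, LinearMap.finrank_range_of_inj hinj, finrank_fin_fun]
    _ = ((vandermondeCheck k α).submatrix (Fin.castLE (min_le_left _ _)) e).rank := rfl
    _ ≤ (vandermondeCheck k α).rank := Matrix.rank_submatrix_le _ _ _

theorem finrank_ker_vandermondeCheck (hα : Function.Injective α) (hα0 : ∀ j, α j ≠ 0) :
    finrank F (ker (vandermondeCheck k α).mulVecLin) = Fintype.card ι - k := by
  have := (vandermondeCheck k α).mulVecLin.finrank_range_add_finrank_ker
  rw [← Matrix.rank, rank_vandermondeCheck hα hα0, finrank_fintype_fun_eq_card] at this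
  omega

end PowerSums

theorem hasLocality_ker_of_rows {F κ ι : Type*} [Field F] [DecidableEq F] [Fintype κ]
    [Fintype ι] (H : Matrix κ ι F) {r : ℕ}
    (hrow : ∀ i, ∃ x, H x i ≠ 0 ∧ hammingNorm (H x) ≤ r + 1) :
    HasLocality (ker H.mulVecLin) r := by
  intro i
  obtain ⟨x, hxi, hx⟩ := hrow i
  refine ⟨({j | H x j ≠ 0} : Finset ι), hx, by simpa using hxi, fun u hu v hv huv => ?_⟩
  have hdual : ∑ j, H x j * (u j - v j) = 0 := by
    simpa [Matrix.mulVec, dotProduct] using congrFun (LinearMap.mem_ker.mp (sub_mem hu hv)) x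
  rw [sum_eq_single i (fun j _ hji => ?_) (by simp)] at hdual
  · exact sub_eq_zero.mp ((mul_eq_zero.mp hdual).resolve_left hxi)
  · by_cases hxj : H x j = 0
    · simp [hxj]
    · exact mul_eq_zero_of_right _ (sub_eq_zero.mpr (huv j (by simpa using hxj) hji))

/-- The `i`-th block `{j | i r ≤ j < (i + 1) r}` of the coordinates `Fin n`. -/
def block (n r i : ℕ) : Finset (Fin n) := {j | (j : ℕ) / r = i}

@[simp]
theorem mem_block {n r i : ℕ} {j : Fin n} : j ∈ block n r i ↔ (j : ℕ) / r = i := by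
  simp [block]

theorem card_block_le {n r : ℕ} (hr : 0 < r) (β : ℕ) : #(block n r β) ≤ r := by
  calc #(block n r β) ≤ #(Ico (β * r) (β * r + r)) := by
        refine card_le_card_of_injOn Fin.val (fun j hj => ?_) Fin.val_injective.injOn
        have := (Nat.div_eq_iff hr).mp (mem_block.mp hj)
        simp only [coe_Ico, Set.mem_Ico]
        omega
    _ = r := by simp

section Lengthen

open Matrix

variable {F : Type*} [Field F] {m n : ℕ} (H0 : Matrix (Fin m) (Fin n) F) (r b : ℕ)

theorem lengthenMatrix_mulVec_inl (c : Fin n ⊕ Fin b → F) (i : Fin b) :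
    (lengthenMatrix H0 r b *ᵥ c) (Sum.inl i)
      = ∑ j ∈ block n r i, c (Sum.inl j) + c (Sum.inr i) := by
  simp [Matrix.mulVec, dotProduct, Fintype.sum_sum_type, lengthenMatrix, block, sum_filter]

theorem lengthenMatrix_mulVec_inr (c : Fin n ⊕ Fin b → F) (t : Fin m) :
    (lengthenMatrix H0 r b *ᵥ c) (Sum.inr t) = (H0 *ᵥ (c ∘ Sum.inl)) t := by
  simp [Matrix.mulVec, dotProduct, Fintype.sum_sum_type, lengthenMatrix]

variable {H0 r b} in
theorem mem_ker_lengthenMatrix {c : Fin n ⊕ Fin b → F} :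
    c ∈ ker (lengthenMatrix H0 r b).mulVecLin ↔
      c ∘ Sum.inl ∈ ker H0.mulVecLin ∧
        ∀ i : Fin b, ∑ j ∈ block n r i, c (Sum.inl j) + c (Sum.inr i) = 0 := by
  simp only [LinearMap.mem_ker, Matrix.mulVecLin_apply, funext_iff, Sum.forall,
    lengthenMatrix_mulVec_inl, lengthenMatrix_mulVec_inr, Pi.zero_apply]
  tauto

/-- The extra coordinates of a codeword are minus its block sums. -/
def kerLengthenEquiv :
    ker (lengthenMatrix H0 r b).mulVecLin ≃ₗ[F] ker H0.mulVecLin where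
  toFun c := ⟨c.1 ∘ Sum.inl, (mem_ker_lengthenMatrix.mp c.2).1⟩
  invFun x := ⟨Sum.elim x.1 fun i => -∑ j ∈ block n r i, x.1 j,
    mem_ker_lengthenMatrix.mpr ⟨x.2, fun i => by simp⟩⟩
  map_add' _ _ := rfl
  map_smul' _ _ := rfl
  left_inv c := by
    ext (j | i)
    · rfl
    · simp [eq_neg_of_add_eq_zero_right ((mem_ker_lengthenMatrix.mp c.2).2 i)]
  right_inv _ := rfl

theorem finrank_ker_lengthenMatrix :
    finrank F (ker (lengthenMatrix H0 r b).mulVecLin) = finrank F (ker H0.mulVecLin) :=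
  (kerLengthenEquiv H0 r b).finrank_eq

variable [DecidableEq F] {H0 r b}

theorem distAtLeast_ker_lengthenMatrix {d : ℕ} (hblock : ∀ j : Fin n, (j : ℕ) / r < b)
    (hH0 : DistAtLeast (ker H0.mulVecLin) d)
    (hH0sum : ∀ x ∈ ker H0.mulVecLin, ∑ j, x j = 0 → x ≠ 0 → d + 1 ≤ hammingNorm x) :
    DistAtLeast (ker (lengthenMatrix H0 r b).mulVecLin) (d + 1) := by
  intro c hc hc0
  obtain ⟨hx, hblk⟩ := mem_ker_lengthenMatrix.mp hc
  have hwt : hammingNorm c = hammingNorm (c ∘ Sum.inl) + hammingNorm (c ∘ Sum.inr) := by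
    rw [← hammingNorm_sum_elim, Sum.elim_comp_inl_inr]
  have hx0 : c ∘ Sum.inl ≠ 0 := by
    intro h
    refine hc0 (funext fun | .inl j => congrFun h j | .inr i => ?_)
    simpa [show ∀ j, c (Sum.inl j) = 0 from congrFun h] using hblk i
  rcases eq_or_ne (c ∘ Sum.inr) 0 with hy | hy
  · have hsum : ∑ j, c (Sum.inl j) = 0 := by
      rw [← sum_fiberwise univ (fun j : Fin n => (⟨(j : ℕ) / r, hblock j⟩ : Fin b))]
      refine sum_eq_zero fun i _ => ?_
      simpa [Fin.ext_iff, block, show c (Sum.inr i) = 0 from congrFun hy i] using hblk i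
    have := hH0sum _ hx hsum hx0
    omega
  · have := hH0 _ hx hx0
    have := hammingNorm_pos_iff.mpr hy
    omega

theorem hasLocality_ker_lengthenMatrix (hr : 0 < r) (hblock : ∀ j : Fin n, (j : ℕ) / r < b) :
    HasLocality (ker (lengthenMatrix H0 r b).mulVecLin) r := by
  have hrow : ∀ β, hammingNorm (lengthenMatrix H0 r b (Sum.inl β)) ≤ r + 1 := by
    intro β
    rw [← Sum.elim_comp_inl_inr (lengthenMatrix H0 r b (Sum.inl β)), hammingNorm_sum_elim]
    have h1 : hammingNorm (lengthenMatrix H0 r b (Sum.inl β) ∘ Sum.inl) = #(block n r β) := by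
      simp [hammingNorm, block, lengthenMatrix]
    have h2 : hammingNorm (lengthenMatrix H0 r b (Sum.inl β) ∘ Sum.inr) = 1 := by
      simp [hammingNorm, lengthenMatrix, filter_eq]
    have := card_block_le (n := n) hr β
    omega
  refine hasLocality_ker_of_rows _ fun
    | .inl j => ⟨.inl ⟨(j : ℕ) / r, hblock j⟩, by simp [lengthenMatrix], hrow _⟩
    | .inr β => ⟨.inl β, by simp [lengthenMatrix], hrow β⟩

end Lengthen

theorem vandermonde_lengthened_code_params_general {n r b d : ℕ}
    {F : Type*} [Field F] [DecidableEq F]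
    (hd : 2 ≤ d) (hr : 1 ≤ r)
    (hb : b = (n + r - 1) / r)
    (α : Fin n → F) (hinj : Function.Injective α) (hne : ∀ j, α j ≠ 0) :
    Module.finrank F (LinearMap.ker
        (lengthenMatrix (fun (t : Fin (d - 1)) (j : Fin n) => α j ^ ((t : ℕ) + 1)) r b).mulVecLin)
      = n + 1 - d ∧
    DistAtLeast (LinearMap.ker
        (lengthenMatrix (fun (t : Fin (d - 1)) (j : Fin n) => α j ^ ((t : ℕ) + 1)) r b).mulVecLin)
      (d + 1) ∧
    HasLocality (LinearMap.ker
        (lengthenMatrix (fun (t : Fin (d - 1)) (j : Fin n) => α j ^ ((t : ℕ) + 1)) r b).mulVecLin)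
      r := by
  have hV : (fun (t : Fin (d - 1)) (j : Fin n) => α j ^ ((t : ℕ) + 1))
      = vandermondeCheck (d - 1) α := rfl
  have hblock (j : Fin n) : (j : ℕ) / r < b :=
    calc (j : ℕ) / r < (j + r) / r := by rw [Nat.add_div_right _ hr]; exact lt_add_one _
      _ ≤ (n + r - 1) / r := Nat.div_le_div_right (by omega)
      _ = b := hb.symm
  rw [hV]
  refine ⟨?_, ?_, hasLocality_ker_lengthenMatrix hr hblock⟩
  · rw [finrank_ker_lengthenMatrix, finrank_ker_vandermondeCheck hinj hne, Fintype.card_fin]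
    omega
  · refine distAtLeast_ker_lengthenMatrix hblock ?_ fun x hx hsum hx0 => ?_
    · simpa only [Nat.sub_add_cancel (by omega : 1 ≤ d)] using
        distAtLeast_ker_vandermondeCheck (k := d - 1) hinj hne
    · have := add_two_le_hammingNorm_of_mem_ker_vandermondeCheck hinj hx hsum hx0
      omega

/-- with `n ≤ q-1`, `n = mr+s`, `1 ≤ s ≤ r`, `d ≥ 2`, the code `C` whose
parity-check matrix is the lengthened matrix built from the Vandermonde columns
`(α_j, α_j², …, α_j^{d-1})ᵀ` (pairwise distinct nonzero `α_j`), block-indicator rows and one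
appended extra column per block, is a `q`-ary linear code of length `n + ⌈n/r⌉`, dimension
`n - d + 1`, minimum distance at least `d + 1`, and locality `r`. -/
theorem vandermonde_lengthened_code_params {q n m s r b d : ℕ}
    {F : Type*} [Field F] [Fintype F] [DecidableEq F] (hcard : Fintype.card F = q)
    (hnq : n ≤ q - 1) (hd : 2 ≤ d) (hr : 1 ≤ r)
    (hn : n = m * r + s) (hs1 : 1 ≤ s) (hsr : s ≤ r)
    (hb : b = (n + r - 1) / r)
    (α : Fin n → F) (hinj : Function.Injective α) (hne : ∀ j, α j ≠ 0) :
    Module.finrank F (LinearMap.ker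
        (lengthenMatrix (fun (t : Fin (d - 1)) (j : Fin n) => α j ^ ((t : ℕ) + 1)) r b).mulVecLin)
      = n + 1 - d ∧
    DistAtLeast (LinearMap.ker
        (lengthenMatrix (fun (t : Fin (d - 1)) (j : Fin n) => α j ^ ((t : ℕ) + 1)) r b).mulVecLin)
      (d + 1) ∧
    HasLocality (LinearMap.ker
        (lengthenMatrix (fun (t : Fin (d - 1)) (j : Fin n) => α j ^ ((t : ℕ) + 1)) r b).mulVecLin)
      r :=
  vandermonde_lengthened_code_params_general hd hr hb α hinj hne
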